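/- For a positive integer n, the energy integral of the global Maxwellian satisfies (1/2) ∫_{ℝⁿ} |v|² · C e^{-|v|²/2}/(1 - kC e^{-|v|²/2}) dv = (n/2)(2π)^{n/2} C L_{(n/2)+1}(kC), provided C > 0 and kC < 1. -/

import Mathlib

/-!
In polar coordinates the integral of a radial function over `ℝⁿ` is the area
`n π^{n/2} / Γ(n/2 + 1)` of the unit sphere times a one-dimensional integral over `(0, ∞)`.
The weight `|v|²` raises the radial power `r^{n-1}` to `r^{n+1} = r^{2(n/2+1)-1}`, which is the
integrand of `L_{n/2+1}`, and the prefactor `2^{-n/2}` of `L_{n/2+1}` cancels against `(2π)^{n/2}`.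
-/

/-- Integral representation of `L_s(z)` for real `s > 0` and `z < 1`:
`L_s(z) = (2^{1-s}/Γ(s)) ∫_0^∞ e^{-r²/2} r^{2s-1}/(1 - z e^{-r²/2}) dr`. -/
noncomputable def Lint (s z : ℝ) : ℝ :=
  (2 ^ (1 - s) / Real.Gamma s) *
    ∫ r in Set.Ioi (0:ℝ),
      Real.exp (-r ^ 2 / 2) * r ^ (2 * s - 1) / (1 - z * Real.exp (-r ^ 2 / 2))

open MeasureTheory Module Real Set

theorem InnerProductSpace.integral_fun_norm {E F : Type*} [NormedAddCommGroup E]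
    [InnerProductSpace ℝ E] [FiniteDimensional ℝ E] [MeasurableSpace E] [BorelSpace E]
    [Nontrivial E] [NormedAddCommGroup F] [NormedSpace ℝ F] (f : ℝ → F) :
    ∫ x : E, f ‖x‖ = (finrank ℝ E * π ^ ((finrank ℝ E : ℝ) / 2) / Gamma (finrank ℝ E / 2 + 1)) •
      ∫ r in Ioi (0 : ℝ), r ^ (finrank ℝ E - 1) • f r := by
  rw [integral_fun_norm_addHaar volume f, measureReal_def, InnerProductSpace.volume_ball,
    ENNReal.ofReal_one, one_pow, one_mul, ENNReal.toReal_ofReal (by positivity),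
    sqrt_eq_rpow, ← rpow_natCast, ← rpow_mul pi_nonneg, ← Nat.cast_smul_eq_nsmul ℝ, smul_smul,
    mul_div_assoc, one_div_mul_eq_div]

theorem two_mul_pi_rpow_mul_Lint (s z : ℝ) :
    (2 * π) ^ (s - 1) * Lint s z = π ^ (s - 1) / Gamma s *
      ∫ r in Ioi (0 : ℝ), exp (-r ^ 2 / 2) * r ^ (2 * s - 1) / (1 - z * exp (-r ^ 2 / 2)) := by
  rw [Lint, mul_rpow zero_le_two pi_nonneg, show 1 - s = -(s - 1) by ring,
    rpow_neg zero_le_two]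
  have : (2 : ℝ) ^ (s - 1) ≠ 0 := (rpow_pos_of_pos two_pos _).ne'
  rw [← mul_assoc]
  congr 1
  field_simp

theorem maxwellian_energy_integral_general (n : ℕ) (hn : 1 ≤ n) (k C : ℝ) :
    (1/2) * ∫ v : EuclideanSpace ℝ (Fin n),
        ‖v‖ ^ 2 * (C * Real.exp (-‖v‖ ^ 2 / 2) / (1 - k * C * Real.exp (-‖v‖ ^ 2 / 2))) =
      ((n : ℝ)/2) * (2 * Real.pi) ^ ((n : ℝ)/2) * C * Lint ((n : ℝ)/2 + 1) (k * C) := by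
  have : Nonempty (Fin n) := ⟨⟨0, hn⟩⟩
  set I := ∫ r in Ioi (0 : ℝ), exp (-r ^ 2 / 2) * r ^ (2 * ((n : ℝ) / 2 + 1) - 1) /
    (1 - k * C * exp (-r ^ 2 / 2))
  have hpow (r : ℝ) : r ^ (n - 1) * r ^ 2 = r ^ (2 * ((n : ℝ) / 2 + 1) - 1) := by
    rw [← pow_add, ← rpow_natCast]
    push_cast [Nat.sub_add_comm hn, Nat.cast_sub hn]
    ring_nf
  have hL : ∫ v : EuclideanSpace ℝ (Fin n),
        ‖v‖ ^ 2 * (C * exp (-‖v‖ ^ 2 / 2) / (1 - k * C * exp (-‖v‖ ^ 2 / 2))) =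
      n * π ^ ((n : ℝ) / 2) / Gamma (n / 2 + 1) * (C * I) := by
    rw [InnerProductSpace.integral_fun_norm
      (fun r => r ^ 2 * (C * exp (-r ^ 2 / 2) / (1 - k * C * exp (-r ^ 2 / 2)))),
      finrank_euclideanSpace_fin, smul_eq_mul]
    congr 1
    simp only [I, ← integral_const_mul]
    congr 1
    funext r
    rw [smul_eq_mul, ← hpow]
    ring
  have hR : (2 * π) ^ ((n : ℝ) / 2) * Lint ((n : ℝ) / 2 + 1) (k * C) =
      π ^ ((n : ℝ) / 2) / Gamma (n / 2 + 1) * I := by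
    have := two_mul_pi_rpow_mul_Lint ((n : ℝ) / 2 + 1) (k * C)
    rwa [add_sub_cancel_right] at this
  rw [hL]
  linear_combination (-(n : ℝ) / 2 * C) * hR

/-- energy integral of the global Maxwellian:
`(1/2)∫_{ℝⁿ} |v|² C e^{-|v|²/2}/(1-kC e^{-|v|²/2}) dv = (n/2)(2π)^{n/2} C L_{(n/2)+1}(kC)`. -/
theorem maxwellian_energy_integral (n : ℕ) (hn : 1 ≤ n) (k C : ℝ) (hC : 0 < C)
    (hkC : k * C < 1) :
    (1/2) * ∫ v : EuclideanSpace ℝ (Fin n),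
        ‖v‖ ^ 2 * (C * Real.exp (-‖v‖ ^ 2 / 2) / (1 - k * C * Real.exp (-‖v‖ ^ 2 / 2))) =
      ((n : ℝ)/2) * (2 * Real.pi) ^ ((n : ℝ)/2) * C * Lint ((n : ℝ)/2 + 1) (k * C) :=
  maxwellian_energy_integral_general n hn k C
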